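/- arXiv:1504.07518 — 8 statements merged into one kernel-verified Lean document; each statement's English description precedes it below -/
import Mathlib

section
/- Every polymatrix coordination game with individual preferences has the finite (α,1)-improvement property for every α ≥ 1: every sequence of joint strategies in which each successive strategy arises from a single player deviating and increasing his payoff by strictly more than a factor α is finite. -/
open Finset

/-- Every polymatrix coordination game with individual preferences has the
finite `(α,1)`-improvement property for every `α ≥ 1`: there is no infinite sequence of
unilateral deviations in which the deviating player improves by strictly more than a
factor `α` at each step. -/
theorem finite_alpha_one_improvement_property
    {N : Type*} [Fintype N] [DecidableEq N]
    (S : N → Type*) [∀ i, Fintype (S i)]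
    (E : N → N → Prop) [∀ i j, Decidable (E i j)]
    (hE_symm : ∀ i j, E i j ↔ E j i) (hE_irrefl : ∀ i, ¬ E i i)
    (q : ∀ i, S i → ℝ) (hq : ∀ i x, 0 ≤ q i x)
    (Q : ∀ i j, S i → S j → ℝ)
    (hQ_nonneg : ∀ i j x y, 0 ≤ Q i j x y)
    (hQ_symm : ∀ i j x y, Q i j x y = Q j i y x)
    (p : (∀ i, S i) → N → ℝ)
    (hp : ∀ s i, p s i = q i (s i) + ∑ j ∈ univ.filter (fun j => E i j), Q i j (s i) (s j))
    (α : ℝ) (hα : 1 ≤ α) :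
    ¬ ∃ σ : ℕ → (∀ i, S i), ∀ t : ℕ, ∃ (i : N) (x : S i),
        x ≠ σ t i ∧ σ (t + 1) = Function.update (σ t) i x ∧
        p (σ (t + 1)) i > α * p (σ t) i := by
  -- payoffs are nonnegative
  have hp_nonneg : ∀ s i, 0 ≤ p s i := by
    intro s i
    rw [hp]
    have : (0:ℝ) ≤ ∑ j ∈ univ.filter (fun j => E i j), Q i j (s i) (s j) :=
      Finset.sum_nonneg fun j _ => hQ_nonneg i j _ _
    linarith [hq i (s i)]
  -- the potential function
  set Φ : (∀ i, S i) → ℝ := fun s => ∑ j, (q j (s j) + p s j) with hΦ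
  -- key lemma: a unilateral deviation changes the potential by twice the payoff change
  have key : ∀ (s : ∀ i, S i) (i : N) (x : S i),
      Φ (Function.update s i x) = Φ s + 2 * (p (Function.update s i x) i - p s i) := by
    intro s i x
    set s' := Function.update s i x with hs'
    have hs'i : s' i = x := Function.update_self i x s
    have hs'j : ∀ j, j ≠ i → s' j = s j := fun j hj => Function.update_of_ne hj x s
    -- the payoff change of the deviator
    have hDi : p s' i - p s i = (q i x - q i (s i)) +
        ∑ j ∈ univ.filter (fun j => E i j), (Q i j x (s j) - Q i j (s i) (s j)) := by
      rw [hp, hp, hs'i]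
      have : ∀ j ∈ univ.filter (fun j => E i j), Q i j x (s' j) = Q i j x (s j) := by
        intro j hj
        have hji : j ≠ i := fun h => hE_irrefl i (h ▸ (Finset.mem_filter.mp hj).2)
        rw [hs'j j hji]
      rw [Finset.sum_congr rfl this, Finset.sum_sub_distrib]
      ring
    -- the change of f j := q j (s j) + p s j for non-deviators
    have hdiff : ∀ j, j ≠ i →
        (q j (s' j) + p s' j) - (q j (s j) + p s j)
          = (if E i j then Q i j x (s j) - Q i j (s i) (s j) else 0) := by
      intro j hj
      have h1 : q j (s' j) = q j (s j) := by rw [hs'j j hj]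
      have h2 : p s' j = q j (s j) + ∑ k ∈ univ.filter (fun k => E j k), Q j k (s j) (s' k) := by
        rw [hp, hs'j j hj]
      have hsum : ∑ k ∈ univ.filter (fun k => E j k), Q j k (s j) (s' k)
          - ∑ k ∈ univ.filter (fun k => E j k), Q j k (s j) (s k)
          = (if E i j then Q i j x (s j) - Q i j (s i) (s j) else 0) := by
        rw [← Finset.sum_sub_distrib]
        by_cases hEji : E j i
        · have hij : E i j := (hE_symm j i).mp hEji
          rw [if_pos hij]
          rw [Finset.sum_eq_single_of_mem i (by simpa using hEji)]
          · rw [hs'i, hQ_symm i j x (s j), hQ_symm i j (s i) (s j)]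
          · intro k _ hk
            rw [hs'j k hk]; ring
        · have hij : ¬ E i j := fun h => hEji ((hE_symm i j).mp h)
          rw [if_neg hij]
          apply Finset.sum_eq_zero
          intro k hk
          have hki : k ≠ i := by
            intro h; subst h; exact hEji (by simpa using hk)
          rw [hs'j k hki]; ring
      rw [h1, h2, hp]
      linarith [hsum]
    -- sum it all up
    have hsplit : Φ s' - Φ s = ∑ j, ((q j (s' j) + p s' j) - (q j (s j) + p s j)) := by
      rw [hΦ, Finset.sum_sub_distrib]
    have : ∑ j, ((q j (s' j) + p s' j) - (q j (s j) + p s j))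
        = ((q i (s' i) + p s' i) - (q i (s i) + p s i)) +
          ∑ j ∈ univ.erase i, ((q j (s' j) + p s' j) - (q j (s j) + p s j)) := by
      rw [← Finset.add_sum_erase _ _ (Finset.mem_univ i)]
    have herase : ∑ j ∈ univ.erase i, ((q j (s' j) + p s' j) - (q j (s j) + p s j))
        = ∑ j ∈ univ.filter (fun j => E i j), (Q i j x (s j) - Q i j (s i) (s j)) := by
      rw [Finset.sum_congr rfl (fun j hj => hdiff j (Finset.ne_of_mem_erase hj))]
      rw [← Finset.sum_filter]
      congr 1
      ext j
      simp only [Finset.mem_filter, Finset.mem_erase, Finset.mem_univ, true_and, and_true]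
      constructor
      · rintro ⟨-, h⟩; exact h
      · intro h
        refine ⟨fun hji => ?_, h⟩
        exact hE_irrefl i (hji ▸ h)
    have hEq : Φ s' - Φ s = 2 * (p s' i - p s i) := by
      rw [hsplit, this, herase, hs'i]
      linarith [hDi]
    linarith [hEq]
  -- now derive the contradiction
  rintro ⟨σ, hσ⟩
  have hmono : StrictMono (fun t => Φ (σ t)) := by
    apply strictMono_nat_of_lt_succ
    intro t
    obtain ⟨i, x, -, hupd, himp⟩ := hσ t
    have h1 : p (σ (t+1)) i > p (σ t) i := by
      have := hp_nonneg (σ t) i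
      nlinarith
    have := key (σ t) i x
    rw [← hupd] at this
    rw [this]
    linarith
  have hinj : Function.Injective (fun t => Φ (σ t)) := hmono.injective
  have hfin : (Set.range fun t => Φ (σ t)).Finite := by
    apply Set.Finite.subset (Set.finite_range Φ)
    rintro _ ⟨t, rfl⟩
    exact ⟨σ t, rfl⟩
  exact (Set.infinite_range_of_injective hinj) hfin
end

section
/- In a polymatrix coordination game with individual preferences, the social welfare SW(s) = Σ_{i∈N} p_i(s) is a (2,k)-generalized potential for every k: for every joint strategy s and every deviation s' = (s'_K, s_{-K}) of a coalition K in which every member i∈K satisfies p_i(s') > 2·p_i(s), we have SW(s') > SW(s). -/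
open Finset

/-- In a polymatrix coordination game with individual preferences, the social
welfare `SW(s) = Σ_i p_i(s)` is a `(2,k)`-generalized potential: any coalitional deviation in
which every member more than doubles his payoff strictly increases the social welfare. -/
theorem social_welfare_is_two_k_generalized_potential
    {N : Type*} [Fintype N] [DecidableEq N]
    (S : N → Type*) [∀ i, Fintype (S i)]
    (E : N → N → Prop) [∀ i j, Decidable (E i j)]
    (hE_symm : ∀ i j, E i j ↔ E j i) (hE_irrefl : ∀ i, ¬ E i i)
    (q : ∀ i, S i → ℝ) (hq : ∀ i x, 0 ≤ q i x)
    (Q : ∀ i j, S i → S j → ℝ)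
    (hQ_nonneg : ∀ i j x y, 0 ≤ Q i j x y)
    (hQ_symm : ∀ i j x y, Q i j x y = Q j i y x)
    (p : (∀ i, S i) → N → ℝ)
    (hp : ∀ s i, p s i = q i (s i) + ∑ j ∈ univ.filter (fun j => E i j), Q i j (s i) (s j))
    (SW : (∀ i, S i) → ℝ) (hSW : ∀ s, SW s = ∑ i, p s i)
    (s s' : ∀ i, S i) (K : Finset N) (hK : K.Nonempty)
    (hdev : ∀ i ∈ K, s' i ≠ s i)
    (hfix : ∀ i ∉ K, s' i = s i)
    (himp : ∀ i ∈ K, p s' i > 2 * p s i) :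
    SW s' > SW s := by
  classical
  -- T i : total edge payoff between outsider i and coalition members, at s
  set T : N → ℝ := fun i => ∑ j ∈ K, (if E i j then Q i j (s i) (s j) else 0) with hT
  -- Step A : outsiders lose at most T i
  have hA : ∀ i ∈ Kᶜ, p s i - T i ≤ p s' i := by
    intro i hi
    rw [Finset.mem_compl] at hi
    rw [hp, hp, hfix i hi]
    have key : ∑ j ∈ univ.filter (fun j => E i j), Q i j (s i) (s j)
        ≤ ∑ j ∈ univ.filter (fun j => E i j),
            (Q i j (s i) (s' j) + if j ∈ K then Q i j (s i) (s j) else 0) := by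
      apply Finset.sum_le_sum
      intro j hj
      by_cases hjK : j ∈ K
      · simp only [hjK, if_pos]
        have := hQ_nonneg i j (s i) (s' j)
        linarith
      · rw [hfix j hjK]
        simp [hjK]
    have hTi : ∑ j ∈ univ.filter (fun j => E i j),
        (if j ∈ K then Q i j (s i) (s j) else 0) = T i := by
      rw [hT]
      simp only [← Finset.sum_filter]
      apply Finset.sum_congr _ (fun _ _ => rfl)
      ext j
      simp [and_comm]
    rw [Finset.sum_add_distrib, hTi] at key
    linarith
  -- Step B : total outsider loss is bounded by coalition's old payoff
  have hB : ∑ i ∈ Kᶜ, T i ≤ ∑ j ∈ K, p s j := by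
    have swap : ∑ i ∈ Kᶜ, T i
        = ∑ j ∈ K, ∑ i ∈ Kᶜ, (if E j i then Q j i (s j) (s i) else 0) := by
      rw [hT]
      rw [Finset.sum_comm]
      apply Finset.sum_congr rfl
      intro j _
      apply Finset.sum_congr rfl
      intro i _
      by_cases h : E i j
      · rw [if_pos h, if_pos ((hE_symm i j).mp h), hQ_symm]
      · rw [if_neg h, if_neg (fun h' => h ((hE_symm j i).mp h'))]
    rw [swap]
    apply Finset.sum_le_sum
    intro j hj
    rw [hp]
    have h1 : ∑ i ∈ Kᶜ, (if E j i then Q j i (s j) (s i) else 0)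
        ≤ ∑ i ∈ univ.filter (fun i => E j i), Q j i (s j) (s i) := by
      rw [← Finset.sum_filter]
      apply Finset.sum_le_sum_of_subset_of_nonneg
        (Finset.filter_subset_filter _ (Finset.subset_univ _))
      intro i _ _
      exact hQ_nonneg _ _ _ _
    have := hq j (s j)
    linarith
  -- Step C : coalition more than doubles
  have hC : 2 * ∑ i ∈ K, p s i < ∑ i ∈ K, p s' i := by
    rw [Finset.mul_sum]
    exact Finset.sum_lt_sum_of_nonempty hK (fun i hi => himp i hi)
  -- Combine
  have hA' : ∑ i ∈ Kᶜ, p s i - ∑ i ∈ Kᶜ, T i ≤ ∑ i ∈ Kᶜ, p s' i := by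
    rw [← Finset.sum_sub_distrib]
    exact Finset.sum_le_sum hA
  have hs : SW s = ∑ i ∈ K, p s i + ∑ i ∈ Kᶜ, p s i := by
    rw [hSW, ← Finset.sum_add_sum_compl K]
  have hs' : SW s' = ∑ i ∈ K, p s' i + ∑ i ∈ Kᶜ, p s' i := by
    rw [hSW, ← Finset.sum_add_sum_compl K]
  rw [hs, hs']
  linarith
end

section
/- In the graph coordination game shown below, with golden ratio φ = (1+√5)/2, where the triangle v_0,v_1,v_2 has edges of weight φ and each v_i (i=0,1,2) is attached to a pendant node u_i by an edge of weight 1, with color sets S_{v_0}={x,z}, S_{v_1}={x,y}, S_{v_2}={y,z}, S_{u_0}={x} (attached to v_0), S_{u_1}={y} (attached to v_1), S_{u_2}={z} (attached to v_2): for every α < φ this game has no α-approximate 2-equilibrium. -/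
open Finset

/-- The golden ratio `φ = (1 + √5)/2`. -/
noncomputable def goldenPhi : ℝ := (1 + Real.sqrt 5) / 2

/-- Nodes of the game: `0,1,2` are `v₀,v₁,v₂` (a triangle), `3` is the pendant `u₃` attached
to `v₀`, `4` is the pendant `u₁` attached to `v₁`, `5` is the pendant `u₂` attached to `v₂`. -/
abbrev NoEqNode := Fin 6

/-- Colors: `0 = x`, `1 = y`, `2 = z`. -/
abbrev NoEqColor := Fin 3

/-- Color sets: `S_{v₀} = {x,z}`, `S_{v₁} = {x,y}`, `S_{v₂} = {y,z}`,
`S_{u₃} = {x}`, `S_{u₁} = {y}`, `S_{u₂} = {z}`. -/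
def noEqAllowed : NoEqNode → Finset NoEqColor
  | 0 => {0, 2}
  | 1 => {0, 1}
  | 2 => {1, 2}
  | 3 => {0}
  | 4 => {1}
  | 5 => {2}

/-- Edge weights: the triangle edges `{v₀,v₁}, {v₁,v₂}, {v₀,v₂}` have weight `φ`; the pendant
edges `{v₀,u₃}, {v₁,u₁}, {v₂,u₂}` have weight `1`; all other pairs are non-adjacent. -/
noncomputable def noEqW (u v : NoEqNode) : ℝ :=
  if (u.val < 3 ∧ v.val < 3 ∧ u ≠ v) then goldenPhi
  else if (u.val + 3 = v.val ∨ v.val + 3 = u.val) then 1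
  else 0

/-- Payoff of node `v` under coloring `s`: total weight of incident unicolor edges. -/
noncomputable def noEqP (s : NoEqNode → NoEqColor) (v : NoEqNode) : ℝ :=
  ∑ u ∈ univ.filter (fun u => s u = s v), noEqW v u

lemma goldenPhi_pos : 0 < goldenPhi := by
  unfold goldenPhi
  positivity

lemma goldenPhi_sq : goldenPhi * goldenPhi = goldenPhi + 1 := by
  have h : Real.sqrt 5 * Real.sqrt 5 = 5 := Real.mul_self_sqrt (by norm_num)
  unfold goldenPhi
  linear_combination h / 4

/-- For every `α < φ` the above graph coordination game has no `α`-approximate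
2-equilibrium: from every valid coloring some coalition of at most two players can deviate
(within their color sets) so that every member's payoff strictly exceeds `α` times his old
payoff. -/
theorem no_alpha_approximate_two_equilibrium (α : ℝ) (hα : α < goldenPhi)
    (s : NoEqNode → NoEqColor) (hs : ∀ v, s v ∈ noEqAllowed v) :
    ∃ (K : Finset NoEqNode) (s' : NoEqNode → NoEqColor),
      K.Nonempty ∧ K.card ≤ 2 ∧
      (∀ v ∈ K, s' v ∈ noEqAllowed v ∧ s' v ≠ s v) ∧
      (∀ v ∉ K, s' v = s v) ∧
      (∀ v ∈ K, noEqP s' v > α * noEqP s v) := by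
  have hphi := goldenPhi_pos
  have hsq := goldenPhi_sq
  have h3 : s 3 = 0 := by simpa [noEqAllowed] using hs 3
  have h4 : s 4 = 1 := by simpa [noEqAllowed] using hs 4
  have h5 : s 5 = 2 := by simpa [noEqAllowed] using hs 5
  have h0 : s 0 = 0 ∨ s 0 = 2 := by simpa [noEqAllowed] using hs 0
  have h1 : s 1 = 0 ∨ s 1 = 1 := by simpa [noEqAllowed] using hs 1
  have h2 : s 2 = 1 ∨ s 2 = 2 := by simpa [noEqAllowed] using hs 2
  rcases h0 with h0 | h0 <;> rcases h1 with h1 | h1 <;> rcases h2 with h2 | h2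
  · -- (0,0,1) : v₂ switches to z, gains pendant edge (1 > α·0)
    refine ⟨{2}, fun v => if v = 2 then 2 else s v, ⟨2, by simp⟩, by simp, ?_, ?_, ?_⟩
    · intro v hv; fin_cases hv
      exact ⟨by simp [noEqAllowed], by simp [h2]⟩
    · intro v hv
      have : v ≠ 2 := by simpa using hv
      simp [this]
    · intro v hv; fin_cases hv
      have hnew : noEqP (fun v => if v = 2 then 2 else s v) 2 = 1 := by
        simp (config := { decide := true }) [noEqP, Finset.sum_filter, Fin.sum_univ_six, noEqW,
          h0, h1, h2, h3, h4, h5]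
      have hold : noEqP s 2 = 0 := by
        simp (config := { decide := true }) [noEqP, Finset.sum_filter, Fin.sum_univ_six, noEqW,
          h0, h1, h2, h3, h4, h5]
      rw [hnew, hold]; nlinarith
  · -- (0,0,2) : v₁ and v₂ both switch to y
    refine ⟨{1, 2}, fun v => if v = 1 then 1 else if v = 2 then 1 else s v,
      ⟨1, by simp⟩, by simp, ?_, ?_, ?_⟩
    · intro v hv; fin_cases hv
      · exact ⟨by simp [noEqAllowed], by simp [h1]⟩
      · exact ⟨by simp [noEqAllowed], by simp [h2]⟩
    · intro v hv
      have hv1 : v ≠ 1 := fun h => hv (by simp [h])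
      have hv2 : v ≠ 2 := fun h => hv (by simp [h])
      simp [hv1, hv2]
    · intro v hv; fin_cases hv
      · have hnew : noEqP (fun v => if v = 1 then 1 else if v = 2 then 1 else s v) 1
            = goldenPhi + 1 := by
          simp (config := { decide := true }) [noEqP, Finset.sum_filter, Fin.sum_univ_six, noEqW,
            h0, h1, h2, h3, h4, h5]
        have hold : noEqP s 1 = goldenPhi := by
          simp (config := { decide := true }) [noEqP, Finset.sum_filter, Fin.sum_univ_six, noEqW,
            h0, h1, h2, h3, h4, h5]
        rw [hnew, hold]; nlinarith
      · have hnew : noEqP (fun v => if v = 1 then 1 else if v = 2 then 1 else s v) 2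
            = goldenPhi := by
          simp (config := { decide := true }) [noEqP, Finset.sum_filter, Fin.sum_univ_six, noEqW,
            h0, h1, h2, h3, h4, h5]
        have hold : noEqP s 2 = 1 := by
          simp (config := { decide := true }) [noEqP, Finset.sum_filter, Fin.sum_univ_six, noEqW,
            h0, h1, h2, h3, h4, h5]
        rw [hnew, hold]; nlinarith
  · -- (0,1,1) : v₀ and v₂ both switch to z
    refine ⟨{0, 2}, fun v => if v = 0 then 2 else if v = 2 then 2 else s v,
      ⟨0, by simp⟩, by simp, ?_, ?_, ?_⟩
    · intro v hv; fin_cases hv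
      · exact ⟨by simp [noEqAllowed], by simp [h0]⟩
      · exact ⟨by simp [noEqAllowed], by simp [h2]⟩
    · intro v hv
      have hv1 : v ≠ 0 := fun h => hv (by simp [h])
      have hv2 : v ≠ 2 := fun h => hv (by simp [h])
      simp [hv1, hv2]
    · intro v hv; fin_cases hv
      · have hnew : noEqP (fun v => if v = 0 then 2 else if v = 2 then 2 else s v) 0
            = goldenPhi := by
          simp (config := { decide := true }) [noEqP, Finset.sum_filter, Fin.sum_univ_six, noEqW,
            h0, h1, h2, h3, h4, h5]
        have hold : noEqP s 0 = 1 := by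
          simp (config := { decide := true }) [noEqP, Finset.sum_filter, Fin.sum_univ_six, noEqW,
            h0, h1, h2, h3, h4, h5]
        rw [hnew, hold]; nlinarith
      · have hnew : noEqP (fun v => if v = 0 then 2 else if v = 2 then 2 else s v) 2
            = goldenPhi + 1 := by
          simp (config := { decide := true }) [noEqP, Finset.sum_filter, Fin.sum_univ_six, noEqW,
            h0, h1, h2, h3, h4, h5]
        have hold : noEqP s 2 = goldenPhi := by
          simp (config := { decide := true }) [noEqP, Finset.sum_filter, Fin.sum_univ_six, noEqW,
            h0, h1, h2, h3, h4, h5]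
        rw [hnew, hold]; nlinarith
  · -- (0,1,2) : v₀ switches to z, now matches v₂
    refine ⟨{0}, fun v => if v = 0 then 2 else s v, ⟨0, by simp⟩, by simp, ?_, ?_, ?_⟩
    · intro v hv; fin_cases hv
      exact ⟨by simp [noEqAllowed], by simp [h0]⟩
    · intro v hv
      have : v ≠ 0 := by simpa using hv
      simp [this]
    · intro v hv; fin_cases hv
      have hnew : noEqP (fun v => if v = 0 then 2 else s v) 0 = goldenPhi := by
        simp (config := { decide := true }) [noEqP, Finset.sum_filter, Fin.sum_univ_six, noEqW,
          h0, h1, h2, h3, h4, h5]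
      have hold : noEqP s 0 = 1 := by
        simp (config := { decide := true }) [noEqP, Finset.sum_filter, Fin.sum_univ_six, noEqW,
          h0, h1, h2, h3, h4, h5]
      rw [hnew, hold]; nlinarith
  · -- (2,0,1) : v₀ switches to x, matches v₁ and pendant
    refine ⟨{0}, fun v => if v = 0 then 0 else s v, ⟨0, by simp⟩, by simp, ?_, ?_, ?_⟩
    · intro v hv; fin_cases hv
      exact ⟨by simp [noEqAllowed], by simp [h0]⟩
    · intro v hv
      have : v ≠ 0 := by simpa using hv
      simp [this]
    · intro v hv; fin_cases hv
      have hnew : noEqP (fun v => if v = 0 then 0 else s v) 0 = goldenPhi + 1 := by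
        simp (config := { decide := true }) [noEqP, Finset.sum_filter, Fin.sum_univ_six, noEqW,
          h0, h1, h2, h3, h4, h5]
      have hold : noEqP s 0 = 0 := by
        simp (config := { decide := true }) [noEqP, Finset.sum_filter, Fin.sum_univ_six, noEqW,
          h0, h1, h2, h3, h4, h5]
      rw [hnew, hold]; nlinarith
  · -- (2,0,2) : v₁ switches to y, gains pendant edge
    refine ⟨{1}, fun v => if v = 1 then 1 else s v, ⟨1, by simp⟩, by simp, ?_, ?_, ?_⟩
    · intro v hv; fin_cases hv
      exact ⟨by simp [noEqAllowed], by simp [h1]⟩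
    · intro v hv
      have : v ≠ 1 := by simpa using hv
      simp [this]
    · intro v hv; fin_cases hv
      have hnew : noEqP (fun v => if v = 1 then 1 else s v) 1 = 1 := by
        simp (config := { decide := true }) [noEqP, Finset.sum_filter, Fin.sum_univ_six, noEqW,
          h0, h1, h2, h3, h4, h5]
      have hold : noEqP s 1 = 0 := by
        simp (config := { decide := true }) [noEqP, Finset.sum_filter, Fin.sum_univ_six, noEqW,
          h0, h1, h2, h3, h4, h5]
      rw [hnew, hold]; nlinarith
  · -- (2,1,1) : v₀ switches to x, gains pendant edge
    refine ⟨{0}, fun v => if v = 0 then 0 else s v, ⟨0, by simp⟩, by simp, ?_, ?_, ?_⟩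
    · intro v hv; fin_cases hv
      exact ⟨by simp [noEqAllowed], by simp [h0]⟩
    · intro v hv
      have : v ≠ 0 := by simpa using hv
      simp [this]
    · intro v hv; fin_cases hv
      have hnew : noEqP (fun v => if v = 0 then 0 else s v) 0 = 1 := by
        simp (config := { decide := true }) [noEqP, Finset.sum_filter, Fin.sum_univ_six, noEqW,
          h0, h1, h2, h3, h4, h5]
      have hold : noEqP s 0 = 0 := by
        simp (config := { decide := true }) [noEqP, Finset.sum_filter, Fin.sum_univ_six, noEqW,
          h0, h1, h2, h3, h4, h5]
      rw [hnew, hold]; nlinarith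
  · -- (2,1,2) : v₀ and v₁ both switch to x
    refine ⟨{0, 1}, fun v => if v = 0 then 0 else if v = 1 then 0 else s v,
      ⟨0, by simp⟩, by simp, ?_, ?_, ?_⟩
    · intro v hv; fin_cases hv
      · exact ⟨by simp [noEqAllowed], by simp [h0]⟩
      · exact ⟨by simp [noEqAllowed], by simp [h1]⟩
    · intro v hv
      have hv1 : v ≠ 0 := fun h => hv (by simp [h])
      have hv2 : v ≠ 1 := fun h => hv (by simp [h])
      simp [hv1, hv2]
    · intro v hv; fin_cases hv
      · have hnew : noEqP (fun v => if v = 0 then 0 else if v = 1 then 0 else s v) 0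
            = goldenPhi + 1 := by
          simp (config := { decide := true }) [noEqP, Finset.sum_filter, Fin.sum_univ_six, noEqW,
            h0, h1, h2, h3, h4, h5]
        have hold : noEqP s 0 = goldenPhi := by
          simp (config := { decide := true }) [noEqP, Finset.sum_filter, Fin.sum_univ_six, noEqW,
            h0, h1, h2, h3, h4, h5]
        rw [hnew, hold]; nlinarith
      · have hnew : noEqP (fun v => if v = 0 then 0 else if v = 1 then 0 else s v) 1
            = goldenPhi := by
          simp (config := { decide := true }) [noEqP, Finset.sum_filter, Fin.sum_univ_six, noEqW,
            h0, h1, h2, h3, h4, h5]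
        have hold : noEqP s 1 = 1 := by
          simp (config := { decide := true }) [noEqP, Finset.sum_filter, Fin.sum_univ_six, noEqW,
            h0, h1, h2, h3, h4, h5]
        rw [hnew, hold]; nlinarith
end

section
/- Let s be an (α,k)-equilibrium and s* a social optimum of a polymatrix coordination game with individual preferences on n ≥ 2 players, with 2 ≤ k ≤ n. Then SW(s*) ≤ 2α·(n−1)/(k−1)·SW(s); i.e., the (α,k)-price of anarchy is at most 2α(n−1)/(k−1). -/
/-!
Fix a profile `s*`. If a coalition `K` with `|K| ≤ k` switches to `s*`, the equilibrium
condition yields a member `i` with `q^i(s*_i) + Σ_{j ∈ K} q^{ij}(s*_i, s*_j) ≤ α p_i(s)`. Since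
`i`'s row accounts for half of the ordered pairs of `K` that contain `i`, removing `i` and
repeating gives `Σ_{i ∈ K} q^i(s*_i) + ½ Σ_{i,j ∈ K} q^{ij}(s*_i, s*_j) ≤ α Σ_{i ∈ K} p_i(s)`.
Summing over all `k`-subsets counts each player `C(n-1, k-1)` times and each ordered pair
`C(n-2, k-2) = (k-1)/(n-1) · C(n-1, k-1)` times, so
`(k-1)/(n-1) · SW(s*) ≤ 2α SW(s)`.
-/

open Finset

namespace Finset

variable {α M : Type*} [DecidableEq α] [AddCommMonoid M]

theorem card_filter_subset_powersetCard {s t : Finset α} (hts : t ⊆ s) {k : ℕ} (htk : #t ≤ k) :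
    #{K ∈ s.powersetCard k | t ⊆ K} = (#s - #t).choose (k - #t) := by
  rw [← card_sdiff_of_subset hts, ← card_powersetCard]
  refine card_nbij' (· \ t) (· ∪ t) (fun K hK => ?_) (fun L hL => ?_)
    (fun K hK => sdiff_union_of_subset (mem_filter.1 hK).2)
    (fun L hL => union_sdiff_cancel_right (disjoint_of_subset_left
      (mem_powersetCard.1 hL).1 sdiff_disjoint))
  · obtain ⟨hK, htK⟩ := mem_filter.1 hK
    obtain ⟨hKs, rfl⟩ := mem_powersetCard.1 hK
    exact mem_powersetCard.2 ⟨sdiff_subset_sdiff hKs le_rfl, card_sdiff_of_subset htK⟩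
  · obtain ⟨hLs, hL⟩ := mem_powersetCard.1 hL
    have hLt : Disjoint L t := disjoint_of_subset_left hLs sdiff_disjoint
    refine mem_filter.2 ⟨mem_powersetCard.2 ⟨union_subset (hLs.trans sdiff_subset) hts, ?_⟩,
      subset_union_right⟩
    rw [card_union_of_disjoint hLt, hL]
    omega

theorem sum_powersetCard_sum (s : Finset α) {k : ℕ} (hk : 1 ≤ k) (f : α → M) :
    ∑ K ∈ s.powersetCard k, ∑ i ∈ K, f i = (#s - 1).choose (k - 1) • ∑ i ∈ s, f i := by
  rw [sum_comm' (t' := s) (s' := fun i => {K ∈ s.powersetCard k | {i} ⊆ K}), smul_sum]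
  · refine sum_congr rfl fun i hi => ?_
    rw [sum_const, card_filter_subset_powersetCard (singleton_subset_iff.2 hi) (by simpa),
      card_singleton]
  · intro K i
    simp only [mem_filter, mem_powersetCard, singleton_subset_iff]
    exact ⟨fun ⟨⟨hKs, hK⟩, hi⟩ => ⟨⟨⟨hKs, hK⟩, hi⟩, hKs hi⟩, fun ⟨h, _⟩ => ⟨h.1, h.2⟩⟩

theorem sum_powersetCard_sum_sum (s : Finset α) {k : ℕ} (hk : 2 ≤ k) (g : α → α → M)
    (hg : ∀ i, g i i = 0) :
    ∑ K ∈ s.powersetCard k, ∑ i ∈ K, ∑ j ∈ K, g i j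
      = (#s - 2).choose (k - 2) • ∑ i ∈ s, ∑ j ∈ s, g i j := by
  simp only [← sum_product']
  rw [sum_comm' (t' := s ×ˢ s)
    (s' := fun p => {K ∈ s.powersetCard k | {p.1, p.2} ⊆ K}), smul_sum]
  · refine sum_congr rfl fun p hp => ?_
    obtain ⟨hi, hj⟩ := mem_product.1 hp
    obtain hij | hij := eq_or_ne p.1 p.2
    · simp [← hij, hg]
    rw [sum_const, card_filter_subset_powersetCard (insert_subset hi (singleton_subset_iff.2 hj))
      (by rwa [card_pair hij]), card_pair hij]
  · intro K p
    simp only [mem_filter, mem_powersetCard, mem_product, insert_subset_iff,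
      singleton_subset_iff]
    exact ⟨fun ⟨⟨hKs, hK⟩, hi, hj⟩ => ⟨⟨⟨hKs, hK⟩, hi, hj⟩, hKs hi, hKs hj⟩,
      fun ⟨h, _⟩ => ⟨h.1, h.2⟩⟩

theorem sum_sum_eq_two_nsmul_sum_add_sum_sum_erase {K : Finset α} {i : α} (hi : i ∈ K)
    {g : α → α → M} (hg_symm : ∀ a b, g a b = g b a) (hg_self : ∀ a, g a a = 0) :
    ∑ a ∈ K, ∑ b ∈ K, g a b
      = 2 • ∑ b ∈ K, g i b + ∑ a ∈ K.erase i, ∑ b ∈ K.erase i, g a b := by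
  have hrow : ∑ b ∈ K.erase i, g i b = ∑ b ∈ K, g i b := sum_erase _ (hg_self i)
  calc ∑ a ∈ K, ∑ b ∈ K, g a b
      = ∑ b ∈ K, g i b + ∑ a ∈ K.erase i, (g a i + ∑ b ∈ K.erase i, g a b) := by
        rw [← add_sum_erase K _ hi]
        simp only [← add_sum_erase K (g _) hi]
    _ = 2 • ∑ b ∈ K, g i b + ∑ a ∈ K.erase i, ∑ b ∈ K.erase i, g a b := by
        simp only [sum_add_distrib, hg_symm _ i, hrow, two_nsmul, add_assoc]

end Finset

theorem sum_add_half_sum_sum_le_sum_of_exists {ι : Type*} [DecidableEq ι] {a b : ι → ℝ}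
    {g : ι → ι → ℝ} (hg_symm : ∀ i j, g i j = g j i) (hg_self : ∀ i, g i i = 0) {k : ℕ}
    (h : ∀ K : Finset ι, K.Nonempty → #K ≤ k → ∃ i ∈ K, a i + ∑ j ∈ K, g i j ≤ b i)
    (K : Finset ι) (hK : #K ≤ k) :
    ∑ i ∈ K, a i + (∑ i ∈ K, ∑ j ∈ K, g i j) / 2 ≤ ∑ i ∈ K, b i := by
  induction K using Finset.strongInduction with
  | H K ih =>
    obtain rfl | hne := K.eq_empty_or_nonempty
    · simp
    obtain ⟨i, hi, hle⟩ := h K hne hK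
    have ih' := ih (K.erase i) (erase_ssubset hi) (card_erase_le.trans hK)
    rw [← add_sum_erase K a hi, ← add_sum_erase K b hi,
      sum_sum_eq_two_nsmul_sum_add_sum_sum_erase hi hg_symm hg_self, two_nsmul]
    linarith

theorem sub_one_mul_sum_add_sum_sum_le_of_forall_card_eq {ι : Type*} [Fintype ι]
    [DecidableEq ι] {a b : ι → ℝ} {g : ι → ι → ℝ} (ha : ∀ i, 0 ≤ a i) (hg_self : ∀ i, g i i = 0)
    {k : ℕ} (hk : 2 ≤ k) (hkn : k ≤ Fintype.card ι)
    (h : ∀ K : Finset ι, #K = k → ∑ i ∈ K, a i + (∑ i ∈ K, ∑ j ∈ K, g i j) / 2 ≤ ∑ i ∈ K, b i) :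
    (k - 1) * (∑ i, a i + ∑ i, ∑ j, g i j) ≤ 2 * (Fintype.card ι - 1) * ∑ i, b i := by
  obtain ⟨m, hm⟩ : ∃ m, Fintype.card ι = m + 2 := ⟨Fintype.card ι - 2, by omega⟩
  obtain ⟨l, rfl⟩ : ∃ l, k = l + 2 := ⟨k - 2, by omega⟩
  have havg := sum_le_sum (s := univ.powersetCard (l + 2)) fun K hK =>
    h K (mem_powersetCard.1 hK).2
  rw [sum_add_distrib, ← sum_div, sum_powersetCard_sum _ (by omega),
    sum_powersetCard_sum_sum _ le_add_self _ hg_self, sum_powersetCard_sum _ (by omega),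
    card_univ, hm, show m + 2 - 1 = m + 1 from rfl, show l + 2 - 1 = l + 1 from rfl] at havg
  simp only [nsmul_eq_mul, Nat.add_sub_cancel] at havg
  set A := ∑ i, a i
  set B := ∑ i, ∑ j, g i j
  set W := ∑ i, b i
  have hratio : ((m + 1 : ℕ) : ℝ) * m.choose l = (m + 1).choose (l + 1) * (l + 1 : ℕ) := by
    exact_mod_cast Nat.add_one_mul_choose_eq m l
  push_cast at hratio
  have hC : (0 : ℝ) < m.choose l := by exact_mod_cast Nat.choose_pos (by omega)
  have hreduced : (m + 1) * A + (l + 1) * B / 2 ≤ (m + 1) * W := by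
    refine le_of_mul_le_mul_left ?_ hC
    calc (m.choose l : ℝ) * ((m + 1) * A + (l + 1) * B / 2)
        = (l + 1) * ((m + 1).choose (l + 1) * A + m.choose l * B / 2) := by
          linear_combination A * hratio
      _ ≤ (l + 1) * ((m + 1).choose (l + 1) * W) := by gcongr
      _ = m.choose l * ((m + 1) * W) := by linear_combination -W * hratio
  have hlm : (l : ℝ) ≤ m := by exact_mod_cast (by omega : l ≤ m)
  have hA : 0 ≤ A := sum_nonneg fun i _ => ha i
  rw [hm]
  push_cast
  nlinarith [mul_le_mul_of_nonneg_left hlm hA]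

section Game

variable {N : Type*} {S : N → Type*} (E : N → N → Prop) [∀ i j, Decidable (E i j)]
  (Q : ∀ i j, S i → S j → ℝ)

def edgePayoff (t : ∀ i, S i) (i j : N) : ℝ :=
  if E i j then Q i j (t i) (t j) else 0

def IsEquilibrium (p : (∀ i, S i) → N → ℝ) (α : ℝ) (k : ℕ) (s : ∀ i, S i) : Prop :=
  ∀ K : Finset N, K.Nonempty → #K ≤ k → ∀ s' : ∀ i, S i,
    (∀ i ∉ K, s' i = s i) → ∃ i ∈ K, p s' i ≤ α * p s i

variable {E Q}

theorem edgePayoff_comm (hE_symm : ∀ i j, E i j ↔ E j i)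
    (hQ_symm : ∀ i j x y, Q i j x y = Q j i y x) (t : ∀ i, S i) (i j : N) :
    edgePayoff E Q t i j = edgePayoff E Q t j i := by
  simp only [edgePayoff, hE_symm i j, hQ_symm i j]

theorem edgePayoff_self (hE_irrefl : ∀ i, ¬ E i i) (t : ∀ i, S i) (i : N) :
    edgePayoff E Q t i i = 0 :=
  if_neg (hE_irrefl i)

theorem edgePayoff_nonneg (hQ_nonneg : ∀ i j x y, 0 ≤ Q i j x y) (t : ∀ i, S i) (i j : N) :
    0 ≤ edgePayoff E Q t i j := by
  unfold edgePayoff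
  split_ifs
  exacts [hQ_nonneg .., le_rfl]

theorem sum_edgePayoff_le_of_eqOn [Fintype N] (hQ_nonneg : ∀ i j x y, 0 ≤ Q i j x y)
    {K : Finset N} {t t' : ∀ i, S i} (htt' : ∀ j ∈ K, t' j = t j) {i : N} (hi : i ∈ K) :
    ∑ j ∈ K, edgePayoff E Q t i j ≤ ∑ j, edgePayoff E Q t' i j := by
  calc ∑ j ∈ K, edgePayoff E Q t i j = ∑ j ∈ K, edgePayoff E Q t' i j :=
        sum_congr rfl fun j hj => by simp only [edgePayoff, htt' i hi, htt' j hj]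
    _ ≤ ∑ j, edgePayoff E Q t' i j :=
        sum_le_univ_sum_of_nonneg fun j => edgePayoff_nonneg hQ_nonneg t' i j

theorem IsEquilibrium.sum_add_half_sum_sum_edgePayoff_le [Fintype N] [DecidableEq N]
    {q : ∀ i, S i → ℝ} {p : (∀ i, S i) → N → ℝ} {α : ℝ} {k : ℕ} {s : ∀ i, S i}
    (hs : IsEquilibrium p α k s) (hp : ∀ t i, p t i = q i (t i) + ∑ j, edgePayoff E Q t i j)
    (hE_symm : ∀ i j, E i j ↔ E j i) (hE_irrefl : ∀ i, ¬ E i i)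
    (hQ_nonneg : ∀ i j x y, 0 ≤ Q i j x y) (hQ_symm : ∀ i j x y, Q i j x y = Q j i y x)
    (sStar : ∀ i, S i) (K : Finset N) (hK : #K ≤ k) :
    ∑ i ∈ K, q i (sStar i) + (∑ i ∈ K, ∑ j ∈ K, edgePayoff E Q sStar i j) / 2
      ≤ ∑ i ∈ K, α * p s i := by
  refine sum_add_half_sum_sum_le_sum_of_exists (edgePayoff_comm hE_symm hQ_symm sStar)
    (edgePayoff_self hE_irrefl sStar) (fun K hne hK => ?_) K hK
  obtain ⟨i, hi, hle⟩ := hs K hne hK (K.piecewise sStar s)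
    fun j hj => K.piecewise_eq_of_notMem _ _ hj
  refine ⟨i, hi, le_trans ?_ hle⟩
  rw [hp, K.piecewise_eq_of_mem _ _ hi]
  gcongr
  exact sum_edgePayoff_le_of_eqOn hQ_nonneg (fun j hj => K.piecewise_eq_of_mem _ _ hj) hi

end Game

theorem alpha_k_price_of_anarchy_upper_bound_general
    {N : Type*} [Fintype N]
    (S : N → Type*)
    (E : N → N → Prop) [∀ i j, Decidable (E i j)]
    (hE_symm : ∀ i j, E i j ↔ E j i) (hE_irrefl : ∀ i, ¬ E i i)
    (q : ∀ i, S i → ℝ) (hq : ∀ i x, 0 ≤ q i x)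
    (Q : ∀ i j, S i → S j → ℝ)
    (hQ_nonneg : ∀ i j x y, 0 ≤ Q i j x y)
    (hQ_symm : ∀ i j x y, Q i j x y = Q j i y x)
    (p : (∀ i, S i) → N → ℝ)
    (hp : ∀ s i, p s i = q i (s i) + ∑ j ∈ univ.filter (fun j => E i j), Q i j (s i) (s j))
    (SW : (∀ i, S i) → ℝ) (hSW : ∀ s, SW s = ∑ i, p s i)
    (n : ℕ) (hn : n = Fintype.card N)
    (k : ℕ) (hk2 : 2 ≤ k) (hkn : k ≤ n)
    (α : ℝ)
    (s : ∀ i, S i)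
    -- `s` is an `(α,k)`-equilibrium:
    (heq : ∀ K : Finset N, K.Nonempty → K.card ≤ k → ∀ s' : ∀ i, S i,
      (∀ i ∉ K, s' i = s i) → ∃ i ∈ K, p s' i ≤ α * p s i)
    (sStar : ∀ i, S i) :
    SW sStar ≤ 2 * α * (n - 1) / (k - 1) * SW s := by
  classical
  have hp' (t : ∀ i, S i) (i : N) : p t i = q i (t i) + ∑ j, edgePayoff E Q t i j := by
    rw [hp, sum_filter]; rfl
  have hSWstar : SW sStar = ∑ i, q i (sStar i) + ∑ i, ∑ j, edgePayoff E Q sStar i j := by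
    rw [hSW, ← sum_add_distrib]
    exact sum_congr rfl fun i _ => hp' sStar i
  have hbound := sub_one_mul_sum_add_sum_sum_le_of_forall_card_eq (fun i => hq i (sStar i))
    (edgePayoff_self hE_irrefl sStar) hk2 (hn ▸ hkn) fun K hK =>
      IsEquilibrium.sum_add_half_sum_sum_edgePayoff_le heq hp' hE_symm hE_irrefl hQ_nonneg
        hQ_symm sStar K hK.le
  rw [← mul_sum, ← hSW, ← hSWstar, ← hn] at hbound
  have hk : (1 : ℝ) < k := by exact_mod_cast hk2
  rw [div_mul_eq_mul_div, le_div_iff₀ (by linarith)]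
  linarith

/-- If `s` is an `(α,k)`-equilibrium and `s*` a social optimum of a polymatrix
coordination game with individual preferences on `n ≥ 2` players, with `2 ≤ k ≤ n`, then
`SW(s*) ≤ 2α(n-1)/(k-1) · SW(s)`. -/
theorem alpha_k_price_of_anarchy_upper_bound
    {N : Type*} [Fintype N] [DecidableEq N]
    (S : N → Type*) [∀ i, Fintype (S i)]
    (E : N → N → Prop) [∀ i j, Decidable (E i j)]
    (hE_symm : ∀ i j, E i j ↔ E j i) (hE_irrefl : ∀ i, ¬ E i i)
    (q : ∀ i, S i → ℝ) (hq : ∀ i x, 0 ≤ q i x)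
    (Q : ∀ i j, S i → S j → ℝ)
    (hQ_nonneg : ∀ i j x y, 0 ≤ Q i j x y)
    (hQ_symm : ∀ i j x y, Q i j x y = Q j i y x)
    (p : (∀ i, S i) → N → ℝ)
    (hp : ∀ s i, p s i = q i (s i) + ∑ j ∈ univ.filter (fun j => E i j), Q i j (s i) (s j))
    (SW : (∀ i, S i) → ℝ) (hSW : ∀ s, SW s = ∑ i, p s i)
    (n : ℕ) (hn : n = Fintype.card N) (hn2 : 2 ≤ n)
    (k : ℕ) (hk2 : 2 ≤ k) (hkn : k ≤ n)
    (α : ℝ) (hα : 1 ≤ α)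
    (s : ∀ i, S i)
    -- `s` is an `(α,k)`-equilibrium:
    (heq : ∀ K : Finset N, K.Nonempty → K.card ≤ k → ∀ s' : ∀ i, S i,
      (∀ i ∉ K, s' i = s i) → ∃ i ∈ K, p s' i ≤ α * p s i)
    (sStar : ∀ i, S i)
    -- `s*` is a social optimum:
    (hopt : ∀ s'' : ∀ i, S i, SW s'' ≤ SW sStar) :
    SW sStar ≤ 2 * α * (n - 1) / (k - 1) * SW s :=
  alpha_k_price_of_anarchy_upper_bound_general S E hE_symm hE_irrefl q hq Q hQ_nonneg hQ_symm p hp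
    SW hSW n hn k hk2 hkn α s heq sStar
end

section
/- Let s be an (α,k)-equilibrium of a polymatrix coordination game with individual preferences, let s* be any joint strategy, and let K = {i_1,…,i_k} be any coalition of size k. Then there is an ordering of K such that for every x ∈ {1,…,k}, q^{i_x}(s*_{i_x}) + Σ_{j ∈ N_{i_x} ∩ {i_1,…,i_x}} q^{i_x j}(s*) ≤ α·p_{i_x}(s). In particular, Σ_{i∈K} ( q^i(s*) + (1/2)·Σ_{j∈N_i∩K} q^{ij}(s*) ) ≤ α·Σ_{i∈K} p_i(s). -/
open Finset

/-! When a coalition `A` deviates to `s*`, each member `i` still earns at least its payoff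
`q^i(s*_i) + Σ_{j ∈ N_i ∩ A} q^{ij}(s*)` in the game restricted to `A`, because the edge payoffs it
loses are non-negative. So the equilibrium property yields, in every nonempty `A ⊆ K`, a player
whose restricted payoff is at most `α·p_i(s)`; putting it last and recursing on the rest of `A`
orders `K`. Summing the resulting bounds counts every edge inside `K` at least as often as
`½ Σ_{i∈K} Σ_{j∈N_i∩K}` does, by symmetry of the edge payoffs. -/

theorem Finset.exists_enumeration_forall_prefix {α : Type*} [DecidableEq α]
    (P : Finset α → α → Prop) {k : ℕ} {K : Finset α} (hK : K.card = k)
    (hP : ∀ A ⊆ K, A.Nonempty → ∃ i ∈ A, P A i) :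
    ∃ f : Fin k → α, Function.Injective f ∧ univ.image f = K ∧
      ∀ x, P ((univ.filter (· ≤ x)).image f) (f x) := by
  induction k generalizing K with
  | zero =>
    refine ⟨finZeroElim, Function.injective_of_subsingleton _, ?_, finZeroElim⟩
    simp [card_eq_zero.mp hK]
  | succ k ih =>
    obtain ⟨i, hiK, hPi⟩ := hP K subset_rfl (card_pos.mp (by omega))
    obtain ⟨g, hg, hgK, hgP⟩ := ih (by rw [card_erase_of_mem hiK, hK]; rfl)
      fun A hA => hP A (hA.trans (erase_subset i K))
    have hi : i ∉ Set.range g := by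
      rintro ⟨y, rfl⟩
      have := mem_image_of_mem g (mem_univ y)
      simp [hgK] at this
    have himage : univ.image (Fin.snoc g i : Fin (k + 1) → α) = K := by
      rw [← coe_inj, coe_image, coe_univ, Set.image_univ, Fin.range_snoc, ← Set.image_univ,
        ← coe_univ, ← coe_image, hgK, coe_erase, Set.insert_sdiff_singleton,
        Set.insert_eq_of_mem (mem_coe.mpr hiK)]
    refine ⟨Fin.snoc g i, Fin.snoc_injective_of_injective hg hi, himage, fun x => ?_⟩
    induction x using Fin.lastCases with
    | last =>
      rwa [filter_true_of_mem fun x _ => Fin.le_last x, himage, Fin.snoc_last]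
    | cast y =>
      have hprefix : (univ.filter (· ≤ y.castSucc)).image (Fin.snoc g i : Fin (k + 1) → α) =
          (univ.filter (· ≤ y)).image g := by
        ext j
        simp [Fin.exists_fin_succ']
      rw [hprefix, Fin.snoc_castSucc (α := fun _ => α)]
      exact hgP y

theorem sum_sum_le_two_mul_sum_sum_le {ι : Type*} [Fintype ι] [LinearOrder ι]
    (w : ι → ι → ℝ) (hsymm : ∀ x y, w x y = w y x) (hdiag : ∀ x, 0 ≤ w x x) :
    ∑ x, ∑ y, w x y ≤ 2 * ∑ x, ∑ y with y ≤ x, w x y := by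
  have hsplit : ∀ x, ∑ y, w x y = ∑ y with y ≤ x, w x y + ∑ y with x < y, w x y := by
    intro x
    simp_rw [← not_le]
    exact (sum_filter_add_sum_filter_not _ _ _).symm
  have hswap : ∑ x, ∑ y with x < y, w x y = ∑ x, ∑ y with y < x, w x y := by
    rw [sum_comm' (t' := univ) (s' := fun y => univ.filter (· < y)) (by simp)]
    simp_rw [hsymm]
  have hlt_le : ∀ x, ∑ y with y < x, w x y ≤ ∑ y with y ≤ x, w x y := fun x =>
    sum_le_sum_of_subset_of_nonneg (monotone_filter_right _ fun _ _ => le_of_lt)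
      fun y hle hlt => by
        obtain rfl : y = x := le_antisymm (by simpa using hle) (by simpa using hlt)
        exact hdiag y
  calc ∑ x, ∑ y, w x y = ∑ x, ∑ y with y ≤ x, w x y + ∑ x, ∑ y with y < x, w x y := by
        rw [← hswap, ← sum_add_distrib]; exact sum_congr rfl fun x _ => hsplit x
    _ ≤ 2 * ∑ x, ∑ y with y ≤ x, w x y := by
        linarith [sum_le_sum fun x (_ : x ∈ univ) => hlt_le x]

theorem sum_filter_and_mem_image {α ι : Type*} [Fintype α] [DecidableEq α] (P : α → Prop)
    [DecidablePred P] (g : α → ℝ) {f : ι → α} (hf : Function.Injective f) (s : Finset ι) :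
    ∑ j ∈ univ.filter (fun j => P j ∧ j ∈ s.image f), g j =
      ∑ y ∈ s, if P (f y) then g (f y) else 0 := by
  rw [← sum_image (f := fun j => if P j then g j else 0) hf.injOn, ← sum_filter]
  congr 1
  ext j
  simp [and_comm]

section PolymatrixGame

variable {N : Type*} [Fintype N] [DecidableEq N] {S : N → Type*}
  (E : N → N → Prop) [∀ i j, Decidable (E i j)] (q : ∀ i, S i → ℝ) (Q : ∀ i j, S i → S j → ℝ)

def restrictedPayoff (t : ∀ i, S i) (A : Finset N) (i : N) : ℝ :=
  q i (t i) + ∑ j ∈ univ.filter (fun j => E i j ∧ j ∈ A), Q i j (t i) (t j)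

/-- An `(α,k)`-equilibrium. -/
def IsCoalitionalEquilibrium (p : (∀ i, S i) → N → ℝ) (α : ℝ) (k : ℕ) (s : ∀ i, S i) : Prop :=
  ∀ K : Finset N, K.Nonempty → K.card ≤ k → ∀ s' : ∀ i, S i,
    (∀ i ∉ K, s' i = s i) → ∃ i ∈ K, p s' i ≤ α * p s i

variable {E q Q}

theorem restrictedPayoff_le (hQ : ∀ i j x y, 0 ≤ Q i j x y) {t s' : ∀ i, S i} {A : Finset N}
    (hs' : ∀ j ∈ A, s' j = t j) {i : N} (hi : i ∈ A) :
    restrictedPayoff E q Q t A i ≤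
      q i (s' i) + ∑ j ∈ univ.filter (E i ·), Q i j (s' i) (s' j) := by
  rw [restrictedPayoff, hs' i hi]
  gcongr
  calc ∑ j ∈ univ.filter (fun j => E i j ∧ j ∈ A), Q i j (t i) (t j)
      = ∑ j ∈ univ.filter (fun j => E i j ∧ j ∈ A), Q i j (t i) (s' j) :=
        sum_congr rfl fun j hj => by rw [hs' j (mem_filter.mp hj).2.2]
    _ ≤ ∑ j ∈ univ.filter (E i ·), Q i j (t i) (s' j) :=
        sum_le_sum_of_subset_of_nonneg (monotone_filter_right _ fun _ _ h => h.1)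
          fun _ _ _ => hQ _ _ _ _

theorem IsCoalitionalEquilibrium.exists_restrictedPayoff_le {p : (∀ i, S i) → N → ℝ} {α : ℝ}
    {k : ℕ} {s : ∀ i, S i} (hs : IsCoalitionalEquilibrium p α k s)
    (hp : ∀ s i, p s i = q i (s i) + ∑ j ∈ univ.filter (E i ·), Q i j (s i) (s j))
    (hQ : ∀ i j x y, 0 ≤ Q i j x y) (t : ∀ i, S i) {A : Finset N} (hA : A.Nonempty)
    (hAk : A.card ≤ k) : ∃ i ∈ A, restrictedPayoff E q Q t A i ≤ α * p s i := by
  classical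
  let s' : ∀ i, S i := fun i => if i ∈ A then t i else s i
  obtain ⟨i, hi, hle⟩ := hs A hA hAk s' fun i hi => if_neg hi
  exact ⟨i, hi, (restrictedPayoff_le hQ (fun j hj => if_pos hj) hi).trans (hp s' i ▸ hle)⟩

theorem sum_half_restrictedPayoff_le {ι : Type*} [Fintype ι] [LinearOrder ι]
    (hE : ∀ i j, E i j ↔ E j i) (hQ_nonneg : ∀ i j x y, 0 ≤ Q i j x y)
    (hQ_symm : ∀ i j x y, Q i j x y = Q j i y x) {f : ι → N} (hf : Function.Injective f)
    (t : ∀ i, S i) (b : N → ℝ)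
    (hb : ∀ x, restrictedPayoff E q Q t ((univ.filter (· ≤ x)).image f) (f x) ≤ b (f x)) :
    ∑ i ∈ univ.image f, (q i (t i) +
        (1 / 2) * ∑ j ∈ univ.filter (fun j => E i j ∧ j ∈ univ.image f), Q i j (t i) (t j))
      ≤ ∑ i ∈ univ.image f, b i := by
  set w : ι → ι → ℝ := fun x y =>
    if E (f x) (f y) then Q (f x) (f y) (t (f x)) (t (f y)) else 0
  have hw_symm : ∀ x y, w x y = w y x := fun x y => by simp only [w, hE (f x), hQ_symm]
  have hw_diag : ∀ x, 0 ≤ w x x := fun x => by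
    simp only [w]; split_ifs <;> simp [hQ_nonneg]
  rw [sum_image hf.injOn, sum_image hf.injOn]
  calc ∑ x, (q (f x) (t (f x)) + (1 / 2) *
        ∑ j ∈ univ.filter (fun j => E (f x) j ∧ j ∈ univ.image f), Q (f x) j (t (f x)) (t j))
      = ∑ x, q (f x) (t (f x)) + (1 / 2) * ∑ x, ∑ y, w x y := by
        simp_rw [sum_filter_and_mem_image _ _ hf, sum_add_distrib, mul_sum]
        rfl
    _ ≤ ∑ x, q (f x) (t (f x)) + ∑ x, ∑ y with y ≤ x, w x y := by
        linarith [sum_sum_le_two_mul_sum_sum_le w hw_symm hw_diag]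
    _ = ∑ x, restrictedPayoff E q Q t ((univ.filter (· ≤ x)).image f) (f x) := by
        simp_rw [restrictedPayoff, sum_filter_and_mem_image _ _ hf, sum_add_distrib]
        rfl
    _ ≤ ∑ x, b (f x) := sum_le_sum fun x _ => hb x

end PolymatrixGame

theorem ordering_lemma_for_equilibrium_general
    {N : Type*} [Fintype N] [DecidableEq N]
    (S : N → Type*)
    (E : N → N → Prop) [∀ i j, Decidable (E i j)]
    (hE_symm : ∀ i j, E i j ↔ E j i)
    (q : ∀ i, S i → ℝ)
    (Q : ∀ i j, S i → S j → ℝ)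
    (hQ_nonneg : ∀ i j x y, 0 ≤ Q i j x y)
    (hQ_symm : ∀ i j x y, Q i j x y = Q j i y x)
    (p : (∀ i, S i) → N → ℝ)
    (hp : ∀ s i, p s i = q i (s i) + ∑ j ∈ univ.filter (fun j => E i j), Q i j (s i) (s j))
    (α : ℝ) (k : ℕ)
    (s : ∀ i, S i)
    -- `s` is an `(α,k)`-equilibrium:
    (heq : ∀ K : Finset N, K.Nonempty → K.card ≤ k → ∀ s' : ∀ i, S i,
      (∀ i ∉ K, s' i = s i) → ∃ i ∈ K, p s' i ≤ α * p s i)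
    (sStar : ∀ i, S i)
    (K : Finset N) (hK : K.card = k) :
    (∃ f : Fin k → N, Function.Injective f ∧ (image f univ = K) ∧
      ∀ x : Fin k,
        q (f x) (sStar (f x)) +
          ∑ j ∈ univ.filter (fun j => E (f x) j ∧ ∃ y : Fin k, y ≤ x ∧ f y = j),
            Q (f x) j (sStar (f x)) (sStar j)
        ≤ α * p s (f x)) ∧
    (∑ i ∈ K, (q i (sStar i) +
        (1 / 2) * ∑ j ∈ univ.filter (fun j => E i j ∧ j ∈ K), Q i j (sStar i) (sStar j))
      ≤ α * ∑ i ∈ K, p s i) := by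
  obtain ⟨f, hf, hfK, hbound⟩ := exists_enumeration_forall_prefix
    (fun A i => restrictedPayoff E q Q sStar A i ≤ α * p s i) hK fun A hA hAne =>
      IsCoalitionalEquilibrium.exists_restrictedPayoff_le heq hp hQ_nonneg sStar hAne
        (hK ▸ card_le_card hA)
  refine ⟨⟨f, hf, hfK, fun x => by simpa [restrictedPayoff] using hbound x⟩, ?_⟩
  rw [← hfK, mul_sum]
  exact sum_half_restrictedPayoff_le hE_symm hQ_nonneg hQ_symm hf sStar _ hbound

/-- If `s` is an `(α,k)`-equilibrium of a polymatrix coordination game with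
individual preferences, `s*` is any joint strategy and `K = {i₁,…,i_k}` is any coalition of
size `k`, then `K` can be ordered so that for every `x`,
`q^{i_x}(s*) + Σ_{j ∈ N_{i_x} ∩ {i₁,…,i_x}} q^{i_x j}(s*) ≤ α·p_{i_x}(s)`; in particular
`Σ_{i∈K} ( q^i(s*) + ½ Σ_{j∈N_i∩K} q^{ij}(s*) ) ≤ α·Σ_{i∈K} p_i(s)`. -/
theorem ordering_lemma_for_equilibrium
    {N : Type*} [Fintype N] [DecidableEq N]
    (S : N → Type*) [∀ i, Fintype (S i)]
    (E : N → N → Prop) [∀ i j, Decidable (E i j)]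
    (hE_symm : ∀ i j, E i j ↔ E j i) (hE_irrefl : ∀ i, ¬ E i i)
    (q : ∀ i, S i → ℝ) (hq : ∀ i x, 0 ≤ q i x)
    (Q : ∀ i j, S i → S j → ℝ)
    (hQ_nonneg : ∀ i j x y, 0 ≤ Q i j x y)
    (hQ_symm : ∀ i j x y, Q i j x y = Q j i y x)
    (p : (∀ i, S i) → N → ℝ)
    (hp : ∀ s i, p s i = q i (s i) + ∑ j ∈ univ.filter (fun j => E i j), Q i j (s i) (s j))
    (α : ℝ) (hα : 1 ≤ α) (k : ℕ) (hk : 1 ≤ k)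
    (s : ∀ i, S i)
    -- `s` is an `(α,k)`-equilibrium:
    (heq : ∀ K : Finset N, K.Nonempty → K.card ≤ k → ∀ s' : ∀ i, S i,
      (∀ i ∉ K, s' i = s i) → ∃ i ∈ K, p s' i ≤ α * p s i)
    (sStar : ∀ i, S i)
    (K : Finset N) (hK : K.card = k) :
    (∃ f : Fin k → N, Function.Injective f ∧ (image f univ = K) ∧
      ∀ x : Fin k,
        q (f x) (sStar (f x)) +
          ∑ j ∈ univ.filter (fun j => E (f x) j ∧ ∃ y : Fin k, y ≤ x ∧ f y = j),
            Q (f x) j (sStar (f x)) (sStar j)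
        ≤ α * p s (f x)) ∧
    (∑ i ∈ K, (q i (sStar i) +
        (1 / 2) * ∑ j ∈ univ.filter (fun j => E i j ∧ j ∈ K), Q i j (sStar i) (sStar j))
      ≤ α * ∑ i ∈ K, p s i) :=
  ordering_lemma_for_equilibrium_general S E hE_symm q Q hQ_nonneg hQ_symm p hp α k s heq sStar K hK
end

section
/- In a graph coordination game, if there exists an (α,k)-improving coalitional deviation from a joint strategy s, then there exists a simple one: a coalition K' with |K'| ≤ k such that the induced subgraph G[K'] is connected, all players in K' deviate to one common color x different from their current colors, and every member's payoff strictly exceeds α times his payoff in s. -/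
open Finset

/-- In a graph coordination game, if there is an `(α,k)`-improving
coalitional deviation from `s`, then there is a *simple* one: a coalition `K'` of size at
most `k` inducing a connected subgraph, all of whose members deviate to one common color `x`
(available to them and different from their current colors), every member improving by
strictly more than a factor `α`. -/
theorem simple_improving_deviation
    {N : Type*} [Fintype N] [DecidableEq N]
    {M : Type*} [Fintype M] [DecidableEq M]
    (G : SimpleGraph N) [DecidableRel G.Adj]
    (allowed : N → Finset M)
    (w : N → N → ℝ) (hw_nonneg : ∀ u v, 0 ≤ w u v) (hw_symm : ∀ u v, w u v = w v u)
    (p : (N → M) → N → ℝ)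
    (hp : ∀ s v, p s v = ∑ u ∈ univ.filter (fun u => G.Adj v u ∧ s u = s v), w v u)
    (α : ℝ) (k : ℕ)
    (s : N → M) (hs : ∀ v, s v ∈ allowed v)
    (K : Finset N) (s' : N → M)
    (hKcard : K.card ≤ k) (hKne : K.Nonempty)
    (hvalid : ∀ v ∈ K, s' v ∈ allowed v)
    (hchange : ∀ v ∈ K, s' v ≠ s v)
    (hfix : ∀ v ∉ K, s' v = s v)
    (himp : ∀ v ∈ K, p s' v > α * p s v) :
    ∃ (K' : Finset N) (x : M),
      K'.Nonempty ∧ K'.card ≤ k ∧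
      (G.induce (K' : Set N)).Connected ∧
      (∀ v ∈ K', x ∈ allowed v ∧ x ≠ s v) ∧
      (∀ v ∈ K', p (fun u => if u ∈ K' then x else s u) v > α * p s v) := by
  classical
  obtain ⟨v₀, hv₀K⟩ := hKne
  set x := s' v₀ with hx
  set A : Set N := {u | u ∈ K ∧ s' u = x} with hA
  set H : SimpleGraph A := G.induce A with hH
  have hv₀A : v₀ ∈ A := ⟨hv₀K, rfl⟩
  set v₀' : A := ⟨v₀, hv₀A⟩ with hv₀'
  set K' : Finset N := K.filter (fun u => ∃ h : u ∈ A, H.Reachable v₀' ⟨u, h⟩) with hK'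
  have hK'mem : ∀ u, u ∈ K' ↔ u ∈ A ∧ ∃ h : u ∈ A, H.Reachable v₀' ⟨u, h⟩ := by
    intro u
    simp only [hK', Finset.mem_filter]
    constructor
    · rintro ⟨h1, h2, h3⟩; exact ⟨h2, h2, h3⟩
    · rintro ⟨h1, h2, h3⟩; exact ⟨h1.1, h2, h3⟩
  have hv₀K' : v₀ ∈ K' := (hK'mem v₀).2 ⟨hv₀A, hv₀A, SimpleGraph.Reachable.refl _⟩
  have hsub : K' ⊆ K := Finset.filter_subset _ _
  -- closure of K' under adjacency within A
  have hclosed : ∀ u ∈ K', ∀ u', G.Adj u u' → u' ∈ A → u' ∈ K' := by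
    intro u hu u' hadj hu'A
    obtain ⟨huA, h1, h2⟩ := (hK'mem u).1 hu
    have hadj' : H.Adj ⟨u, huA⟩ ⟨u', hu'A⟩ := hadj
    have : H.Reachable v₀' ⟨u', hu'A⟩ := by
      refine SimpleGraph.Reachable.trans ?_ hadj'.reachable
      have : (⟨u, h1⟩ : A) = ⟨u, huA⟩ := rfl
      exact this ▸ h2
    exact (hK'mem u').2 ⟨hu'A, hu'A, this⟩
  -- reachability transfers to the induced graph on K'
  have key : ∀ (a b : A) (W : H.Walk a b), ∀ (ha : (a : N) ∈ K'),
      ∃ hb : (b : N) ∈ K',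
        (G.induce (K' : Set N)).Reachable ⟨a, by exact_mod_cast ha⟩ ⟨b, by exact_mod_cast hb⟩ := by
    intro a b W
    induction W with
    | nil => intro ha; exact ⟨ha, SimpleGraph.Reachable.refl _⟩
    | @cons a c b hac q ih =>
        intro ha
        have hcK' : (c : N) ∈ K' := hclosed a ha c hac c.2
        obtain ⟨hb, hr⟩ := ih hcK'
        refine ⟨hb, SimpleGraph.Reachable.trans ?_ hr⟩
        exact SimpleGraph.Adj.reachable (by exact_mod_cast hac)
  have hreach : ∀ u (hu : u ∈ K'),
      (G.induce (K' : Set N)).Reachable ⟨v₀, by exact_mod_cast hv₀K'⟩ ⟨u, by exact_mod_cast hu⟩ := by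
    intro u hu
    obtain ⟨huA, h1, h2⟩ := (hK'mem u).1 hu
    obtain ⟨W⟩ := h2
    obtain ⟨hb, hr⟩ := key v₀' ⟨u, h1⟩ W hv₀K'
    exact hr
  have hconn : (G.induce (K' : Set N)).Connected := by
    rw [SimpleGraph.connected_iff]
    refine ⟨?_, ⟨⟨v₀, by exact_mod_cast hv₀K'⟩⟩⟩
    intro a b
    have ha' : (a : N) ∈ K' := by exact_mod_cast a.2
    have hb' : (b : N) ∈ K' := by exact_mod_cast b.2
    exact (hreach a ha').symm.trans (hreach b hb')
  refine ⟨K', x, ⟨v₀, hv₀K'⟩, le_trans (Finset.card_le_card hsub) hKcard, hconn, ?_, ?_⟩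
  · intro v hv
    obtain ⟨hvA, _⟩ := (hK'mem v).1 hv
    exact ⟨hvA.2 ▸ hvalid v hvA.1, hvA.2 ▸ hchange v hvA.1⟩
  · intro v hv
    obtain ⟨hvA, _⟩ := (hK'mem v).1 hv
    set t : N → M := fun u => if u ∈ K' then x else s u with ht
    have htv : t v = x := by simp [ht, hv]
    have h1 : p s' v ≤ p t v := by
      rw [hp, hp]
      apply Finset.sum_le_sum_of_subset_of_nonneg
      · intro u hu
        simp only [Finset.mem_filter, Finset.mem_univ, true_and] at hu ⊢
        obtain ⟨hadj, heq⟩ := hu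
        refine ⟨hadj, ?_⟩
        rw [htv]
        have hux : s' u = x := by rw [heq, hvA.2]
        by_cases huK : u ∈ K
        · have huK' : u ∈ K' := hclosed v hv u hadj ⟨huK, hux⟩
          simp [ht, huK']
        · have huK' : u ∉ K' := fun h => huK (hsub h)
          have hsu : s u = x := by rw [← hfix u huK]; exact hux
          simp [ht, huK', hsu]
      · intro u _ _; exact hw_nonneg v u
    calc α * p s v < p s' v := himp v hvA.1
      _ ≤ p t v := h1
end

section
/- Let G be a graph coordination game on a tree, rooted at an arbitrary node r, and let s be a subgame perfect equilibrium of the sequential-move game where players choose colors in a top-down order along the tree. Then the joint strategy implemented by s is a strong equilibrium of the (simultaneous-move) graph coordination game: no coalition of players can deviate so that every member strictly increases his payoff. -/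
open Finset

private lemma depth_aux {N : Type*} [DecidableEq N] (parent : N → N) (r : N)
    (htree : ∀ v : N, ∃ j : ℕ, parent^[j] v = r) (c u : N) (hcr : c ≠ r) (hcu : parent c = u) :
    Nat.find (htree c) = Nat.find (htree u) + 1 := by
  have h1 : parent^[Nat.find (htree u) + 1] c = r := by
    rw [Function.iterate_succ_apply, hcu]; exact Nat.find_spec (htree u)
  have h2 : Nat.find (htree c) ≤ Nat.find (htree u) + 1 := Nat.find_le h1
  have h3 : Nat.find (htree c) ≠ 0 := by
    intro h
    have h4 := Nat.find_spec (htree c)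
    rw [h] at h4
    exact hcr (by simpa using h4)
  obtain ⟨k, hk⟩ := Nat.exists_eq_succ_of_ne_zero h3
  have h4 := Nat.find_spec (htree c)
  rw [hk, Function.iterate_succ_apply, hcu] at h4
  have h5 : Nat.find (htree u) ≤ k := Nat.find_le h4
  omega

private lemma no_chain {N : Type*} [Finite N] (Inv : N → Prop) (d : N → ℕ) (v : N) (hv : Inv v)
    (hstep : ∀ u, Inv u → ∃ c, Inv c ∧ d c = d u + 1) : False := by
  choose g hg1 hg2 using hstep
  let f : ℕ → {u : N // Inv u} := fun n =>
    Nat.rec ⟨v, hv⟩ (fun _ p => ⟨g p.1 p.2, hg1 p.1 p.2⟩) n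
  have hmono : ∀ n, d (f n).1 = d v + n := by
    intro n
    induction n with
    | zero => rfl
    | succ n ih =>
      have h : d (f (n + 1)).1 = d (f n).1 + 1 := hg2 (f n).1 (f n).2
      omega
  obtain ⟨a, b, hab, h⟩ := Finite.exists_ne_map_eq_of_infinite (fun n => (f n).1)
  apply hab
  have ha := hmono a
  have hb := hmono b
  have h' : (f a).1 = (f b).1 := h
  rw [h'] at ha
  omega

/-- Let a graph coordination game be given on a tree rooted at `r`
(encoded by a parent function), and let a subgame perfect equilibrium of the induced
sequential-move game be given, encoded by:
* `resp v x` — the color chosen by `v` when his parent plays `x`;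
* `sub v y` — the joint strategy implemented on the subtree `T_v` when `v` plays `y`
  (nodes of `T_v` other than `v` responding to their parent's implemented color);
* the subgame perfection conditions `hSPE` (for every node and every parent color, the
  prescribed response maximizes the node's payoff among available colors, given the induced
  behavior of its subtree) and `hroot_opt` (the root's choice is optimal).

Then the implemented joint strategy `sub r x₀` is a strong equilibrium of the
simultaneous-move graph coordination game: no coalition can deviate (within color sets) so
that every member strictly increases his payoff. -/
theorem spe_on_tree_is_strong_equilibrium
    {N : Type*} [Fintype N] [DecidableEq N]
    {M : Type*} [Fintype M] [DecidableEq M]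
    (parent : N → N) (r : N)
    (hroot : parent r = r)
    (htree : ∀ v : N, ∃ j : ℕ, parent^[j] v = r)
    (w : N → N → ℝ) (hw_nonneg : ∀ u v, 0 ≤ w u v) (hw_symm : ∀ u v, w u v = w v u)
    (allowed : N → Finset M) (hallowed : ∀ v, (allowed v).Nonempty)
    -- payoff of `v` in the simultaneous game: total weight of tree edges at `v` whose
    -- other endpoint has the same color
    (p : (N → M) → N → ℝ)
    (hp : ∀ s v, p s v =
      (if v ≠ r ∧ s (parent v) = s v then w v (parent v) else 0) +
      ∑ c ∈ univ.filter (fun c => c ≠ r ∧ parent c = v), (if s c = s v then w v c else 0))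
    -- payoff of `v` when his parent plays `x` and his subtree plays `σ`
    (pay : N → M → (N → M) → ℝ)
    (hpay : ∀ v x σ, pay v x σ =
      (if v ≠ r ∧ σ v = x then w v (parent v) else 0) +
      ∑ c ∈ univ.filter (fun c => c ≠ r ∧ parent c = v), (if σ c = σ v then w v c else 0))
    (resp : N → M → M) (hresp : ∀ v x, resp v x ∈ allowed v)
    (sub : N → M → (N → M))
    (hsub_self : ∀ v y, sub v y v = y)
    (hsub_desc : ∀ (v : N) (y : M) (u : N), u ≠ v → (∃ j : ℕ, parent^[j] u = v) →
      sub v y u = resp u (sub v y (parent u)))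
    -- subgame perfection: for every node `v` and parent color `x`, playing `resp v x`
    -- (with the subtree behaving accordingly) is at least as good as playing any `y`
    (hSPE : ∀ (v : N) (x : M), ∀ y ∈ allowed v,
      pay v x (sub v y) ≤ pay v x (sub v (resp v x)))
    (x₀ : M) (hx₀ : x₀ ∈ allowed r)
    (hroot_opt : ∀ y ∈ allowed r, pay r y (sub r y) ≤ pay r x₀ (sub r x₀)) :
    -- the implemented strategy is a strong equilibrium
    ∀ (K : Finset N) (s' : N → M), K.Nonempty →
      (∀ v ∈ K, s' v ∈ allowed v ∧ s' v ≠ sub r x₀ v) →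
      (∀ v ∉ K, s' v = sub r x₀ v) →
      ∃ v ∈ K, p s' v ≤ p (sub r x₀) v := by
  intro K s' hKne hK hKc
  by_contra hcon
  push_neg at hcon
  set s : N → M := sub r x₀ with hs
  -- basic facts
  have hfix : ∀ c, parent c = c → c = r := by
    intro c hc
    obtain ⟨j, hj⟩ := htree c
    rwa [Function.iterate_fixed hc j] at hj
  have hs_r : s r = x₀ := by rw [hs]; exact hsub_self r x₀
  have hs_rec : ∀ t, t ≠ r → s t = resp t (s (parent t)) := by
    intro t ht
    rw [hs]
    exact hsub_desc r x₀ t ht (htree t)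
  have hchild : ∀ u z c, c ≠ r → parent c = u → sub u z c = resp c z := by
    intro u z c hcr hcu
    have hcu' : c ≠ u := by
      intro h
      exact hcr (hfix c (by rw [hcu, h]))
    rw [hsub_desc u z c hcu' ⟨1, by rw [Function.iterate_one]; exact hcu⟩, hcu, hsub_self]
  have paySub : ∀ u x z, pay u x (sub u z) =
      (if u ≠ r ∧ z = x then w u (parent u) else 0) +
      ∑ c ∈ univ.filter (fun c => c ≠ r ∧ parent c = u),
        (if resp c z = z then w u c else 0) := by
    intro u x z
    rw [hpay]
    simp only [hsub_self]
    congr 1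
    refine Finset.sum_congr rfl ?_
    intro c hc
    simp only [mem_filter, mem_univ, true_and] at hc
    rw [hchild u z c hc.1 hc.2]
  have L3 : ∀ u, p s u = pay u (s (parent u)) (sub u (s u)) := by
    intro u
    rw [hp, paySub]
    congr 1
    · exact if_congr (and_congr_right fun _ => eq_comm) rfl rfl
    · refine Finset.sum_congr rfl ?_
      intro c hc
      simp only [mem_filter, mem_univ, true_and] at hc
      rw [hs_rec c hc.1, hc.2]
  -- depth function
  obtain ⟨d, hd_child⟩ : ∃ d : N → ℕ, ∀ c u, c ≠ r → parent c = u → d c = d u + 1 :=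
    ⟨fun u => Nat.find (htree u), fun c u hcr hcu => depth_aux parent r htree c u hcr hcu⟩
  -- step lemma
  have hstep : ∀ u, u ∈ K → pay u (s' (parent u)) (sub u (s' u)) < p s' u →
      ∃ c, (c ≠ r ∧ parent c = u) ∧ c ∈ K ∧
        pay c (s' (parent c)) (sub c (s' c)) < p s' c := by
    intro u huK hlt
    obtain ⟨halu, hneu⟩ := hK u huK
    rw [paySub, hp] at hlt
    have hpt : (if u ≠ r ∧ s' u = s' (parent u) then w u (parent u) else 0)
        = (if u ≠ r ∧ s' (parent u) = s' u then w u (parent u) else 0) :=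
      if_congr (and_congr_right fun _ => eq_comm) rfl rfl
    rw [hpt] at hlt
    have hsum := lt_of_add_lt_add_left hlt
    obtain ⟨c, hcmem, hclt⟩ := Finset.exists_lt_of_sum_lt hsum
    simp only [mem_filter, mem_univ, true_and] at hcmem
    obtain ⟨hcr, hcu⟩ := hcmem
    have hs'c : s' c = s' u := by
      by_contra h
      rw [if_neg h] at hclt
      have h0 := hw_nonneg u c
      split at hclt <;> linarith
    have hw2 : resp c (s' u) ≠ s' u := by
      intro h
      rw [if_pos h, if_pos hs'c] at hclt
      exact lt_irrefl _ hclt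
    have hwpos : 0 < w u c := by
      rwa [if_neg hw2, if_pos hs'c] at hclt
    have payc : ∀ x z, pay c x (sub c z) =
        (if z = x then w c u else 0) +
        ∑ e ∈ univ.filter (fun e => e ≠ r ∧ parent e = c),
          (if resp e z = z then w c e else 0) := by
      intro x z
      rw [paySub c x z, hcu]
      congr 1
      exact if_congr (and_iff_right hcr) rfl rfl
    have hsrecc : s c = resp c (s u) := by
      have h := hs_rec c hcr
      rwa [hcu] at h
    have hcK : c ∈ K := by
      by_contra hcK'
      have hsc : s c = s' u := (hKc c hcK').symm.trans hs'c
      have hys : s' u ≠ s u := hneu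
      have hyal : s' u ∈ allowed c := by
        rw [← hsc, hsrecc]
        exact hresp c (s u)
      have hA := hSPE c (s' u) (s' u) hyal
      rw [payc, payc, if_pos rfl, if_neg hw2, zero_add] at hA
      have hrc : resp c (s u) = s' u := hsrecc.symm.trans hsc
      have hB := hSPE c (s u) (resp c (s' u)) (hresp c (s' u))
      rw [hrc] at hB
      rw [payc, payc, if_neg hys, zero_add] at hB
      have hif : (0:ℝ) ≤ (if resp c (s' u) = s u then w c u else 0) := by
        split
        · exact hw_nonneg c u
        · exact le_refl 0
      have hw' := hw_symm u c
      linarith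
    refine ⟨c, ⟨hcr, hcu⟩, hcK, ?_⟩
    obtain ⟨halc, hnec⟩ := hK c hcK
    have hyal : s' u ∈ allowed c := by rw [← hs'c]; exact halc
    have h1 := hSPE c (s' u) (s' u) hyal
    rw [payc, payc, if_pos rfl, if_neg hw2, zero_add] at h1
    have hrc : resp c (s u) = s c := hsrecc.symm
    have h2 := hSPE c (s u) (resp c (s' u)) (hresp c (s' u))
    rw [hrc] at h2
    rw [payc] at h2
    have h3 : pay c (s u) (sub c (s c)) = p s c := by
      rw [L3 c, hcu]
    rw [h3] at h2
    have h4 := hcon c hcK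
    have hif : (0:ℝ) ≤ (if resp c (s' u) = s u then w c u else 0) := by
      split
      · exact hw_nonneg c u
      · exact le_refl 0
    rw [hcu, hs'c, payc, if_pos rfl]
    linarith
  -- base case
  obtain ⟨v, hvK, hvmin⟩ := K.exists_min_image d hKne
  have hbase : pay v (s' (parent v)) (sub v (s' v)) < p s' v := by
    obtain ⟨hall, hne⟩ := hK v hvK
    by_cases hvr : v = r
    · subst hvr
      rw [hroot]
      have h1 := hroot_opt (s' v) hall
      have h2 : pay v x₀ s = p s v := by
        rw [L3 v, hroot, hs_r, hs]
      rw [h2] at h1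
      exact lt_of_le_of_lt h1 (hcon v hvK)
    · have hpv : parent v ∉ K := by
        intro hmem
        have h1 := hvmin (parent v) hmem
        have h2 := hd_child v (parent v) hvr rfl
        omega
      have hx : s' (parent v) = s (parent v) := hKc (parent v) hpv
      have h1 := hSPE v (s (parent v)) (s' v) hall
      rw [← hs_rec v hvr] at h1
      rw [hx]
      exact lt_of_le_of_lt (h1.trans_eq (L3 v).symm) (hcon v hvK)
  exact no_chain
    (fun u => u ∈ K ∧ pay u (s' (parent u)) (sub u (s' u)) < p s' u) d v ⟨hvK, hbase⟩
    (fun u hu => by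
      obtain ⟨c, ⟨hcr, hcu⟩, h⟩ := hstep u hu.1 hu.2
      exact ⟨c, h, hd_child c u hcr hcu⟩)
end

section
/- Let G be a polymatrix coordination game with individual preferences, s' any joint strategy, and K the set of the k players with highest payoff under s'. Then the restricted game G[s'_K] (where players in K are fixed to play s'_K) is (k/n, 0)-smooth with respect to s': for every joint strategy s of the remaining players extended by s'_K on K, Σ_{v∈N} p_v(s'_v, s_{-v}) ≥ (k/n)·SW(s'). Consequently, every Nash equilibrium s of G[s'_K] satisfies SW(s'_K, s_{-K}) ≥ (k/n)·SW(s'). -/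
/-!
Under `s'` the `k` top players earn at least a `k/n` share of the welfare, by averaging. Each
player `v` deviating to `s'_v` still collects `q^v(s'_v)` and the edge payoffs toward the players
fixed in `K`, all of whom play `s'`. Summing these guaranteed payoffs over `v` counts every edge
payoff that a player of `K` receives under `s'` (by symmetry of `E` and `Q`), which dominates the
welfare of `K` under `s'`. At an equilibrium no player outside `K` gains by this deviation.
-/

open Finset Function

section TopShare

variable {ι R : Type*} [Fintype ι] [DecidableEq ι]

theorem card_mul_sum_le_card_mul_sum_of_forall_le [CommSemiring R] [PartialOrder R]
    [IsOrderedRing R] (f : ι → R) (K : Finset ι) (hK : ∀ i ∈ K, ∀ j ∉ K, f j ≤ f i) :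
    (#K : R) * ∑ i, f i ≤ Fintype.card ι * ∑ i ∈ K, f i := by
  have hcompl : (#K : R) * ∑ j ∈ Kᶜ, f j ≤ #Kᶜ * ∑ i ∈ K, f i := by
    simp only [← nsmul_eq_mul, ← sum_const]
    rw [sum_comm]
    exact sum_le_sum fun j hj => sum_le_sum fun i hi => hK i hi j (mem_compl.mp hj)
  calc (#K : R) * ∑ i, f i = #K * ∑ i ∈ K, f i + #K * ∑ j ∈ Kᶜ, f j := by
        rw [← sum_add_sum_compl K, mul_add]
    _ ≤ #K * ∑ i ∈ K, f i + #Kᶜ * ∑ i ∈ K, f i := by gcongr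
    _ = Fintype.card ι * ∑ i ∈ K, f i := by
        rw [← add_mul, ← Nat.cast_add, card_add_card_compl]

theorem card_div_card_mul_sum_le_sum_of_forall_le [Field R] [LinearOrder R]
    [IsStrictOrderedRing R] (f : ι → R) (K : Finset ι) (hK : ∀ i ∈ K, ∀ j ∉ K, f j ≤ f i) :
    (#K : R) / Fintype.card ι * ∑ i, f i ≤ ∑ i ∈ K, f i := by
  rcases isEmpty_or_nonempty ι with hι | hι
  · simp [Finset.univ_eq_empty, Finset.eq_empty_of_isEmpty K]
  · rw [div_mul_eq_mul_div, div_le_iff₀ (by exact_mod_cast Fintype.card_pos),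
      mul_comm (∑ i ∈ K, f i)]
    exact card_mul_sum_le_card_mul_sum_of_forall_le f K hK

end TopShare

theorem sum_update_le_sum_of_forall_update_le {N R : Type*} [Fintype N] [DecidableEq N]
    [AddCommMonoid R] [PartialOrder R] [IsOrderedAddMonoid R] {S : N → Type*}
    (p : (∀ i, S i) → N → R) {K : Finset N} {s s' : ∀ i, S i} (hs : ∀ i ∈ K, s i = s' i)
    (hnash : ∀ v ∉ K, ∀ y : S v, p (update s v y) v ≤ p s v) :
    ∑ v, p (update s v (s' v)) v ≤ ∑ v, p s v := by
  refine sum_le_sum fun v _ => ?_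
  by_cases hv : v ∈ K
  · rw [← hs v hv, update_eq_self]
  · exact hnash v hv (s' v)

theorem sum_sum_filter_comm_of_symm {N M : Type*} [Fintype N] [AddCommMonoid M]
    {E : N → N → Prop} [DecidableRel E] (hE : ∀ i j, E i j ↔ E j i) (K : Finset N)
    (F : N → N → M) :
    ∑ j ∈ K, ∑ v ∈ univ.filter (E j), F j v = ∑ v, ∑ j ∈ K.filter (E v), F j v := by
  simp only [sum_filter]
  rw [sum_comm]
  exact sum_congr rfl fun v _ => sum_congr rfl fun j _ => if_congr (hE j v) rfl rfl

namespace PolymatrixGame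

variable {N R : Type*} [Fintype N] [AddCommMonoid R] {S : N → Type*}
  (E : N → N → Prop) [DecidableRel E] (q : ∀ i, S i → R) (Q : ∀ i j, S i → S j → R)

def payoff (s : ∀ i, S i) (i : N) : R :=
  q i (s i) + ∑ j ∈ univ.filter (E i), Q i j (s i) (s j)

/-- What `v` earns by playing `s' v` whatever the players outside `K` do, when those of `K`
play `s'`. -/
def guaranteedPayoff (K : Finset N) (s' : ∀ i, S i) (v : N) : R :=
  q v (s' v) + ∑ j ∈ K.filter (E v), Q v j (s' v) (s' j)

variable {E q Q} [PartialOrder R] [IsOrderedAddMonoid R]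

theorem guaranteedPayoff_le_payoff_update [DecidableEq N] (hE : ∀ i, ¬ E i i)
    (hQ : ∀ i j x y, 0 ≤ Q i j x y) {K : Finset N} {s s' : ∀ i, S i}
    (hs : ∀ i ∈ K, s i = s' i) (v : N) :
    guaranteedPayoff E q Q K s' v ≤ payoff E q Q (update s v (s' v)) v := by
  have hneighbours : ∑ j ∈ univ.filter (E v), Q v j (s' v) (update s v (s' v) j) =
      ∑ j ∈ univ.filter (E v), Q v j (s' v) (s j) := by
    refine sum_congr rfl fun j hj => ?_
    rw [update_of_ne (by rintro rfl; exact hE j (mem_filter.mp hj).2)]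
  have hK : ∑ j ∈ K.filter (E v), Q v j (s' v) (s' j) =
      ∑ j ∈ K.filter (E v), Q v j (s' v) (s j) :=
    sum_congr rfl fun j hj => by rw [hs j (mem_filter.mp hj).1]
  rw [guaranteedPayoff, payoff, update_self, hneighbours, hK]
  gcongr
  · exact fun j _ _ => hQ _ _ _ _
  · exact subset_univ K

theorem sum_payoff_le_sum_guaranteedPayoff (hE : ∀ i j, E i j ↔ E j i) (hq : ∀ i x, 0 ≤ q i x)
    (hQ : ∀ i j x y, Q i j x y = Q j i y x) (K : Finset N) (s' : ∀ i, S i) :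
    ∑ j ∈ K, payoff E q Q s' j ≤ ∑ v, guaranteedPayoff E q Q K s' v := by
  have hedges : ∑ j ∈ K, ∑ v ∈ univ.filter (E j), Q j v (s' j) (s' v) =
      ∑ v, ∑ j ∈ K.filter (E v), Q v j (s' v) (s' j) := by
    rw [sum_sum_filter_comm_of_symm hE K fun j v => Q j v (s' j) (s' v)]
    exact sum_congr rfl fun v _ => sum_congr rfl fun j _ => hQ _ _ _ _
  simp only [payoff, guaranteedPayoff, sum_add_distrib, hedges]
  gcongr
  · exact fun j _ _ => hq _ _
  · exact subset_univ K

end PolymatrixGame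

open PolymatrixGame in
theorem restricted_game_smoothness_general
    {N : Type*} [Fintype N] [DecidableEq N]
    (S : N → Type*)
    (E : N → N → Prop) [∀ i j, Decidable (E i j)]
    (hE_symm : ∀ i j, E i j ↔ E j i) (hE_irrefl : ∀ i, ¬ E i i)
    (q : ∀ i, S i → ℝ) (hq : ∀ i x, 0 ≤ q i x)
    (Q : ∀ i j, S i → S j → ℝ)
    (hQ_nonneg : ∀ i j x y, 0 ≤ Q i j x y)
    (hQ_symm : ∀ i j x y, Q i j x y = Q j i y x)
    (p : (∀ i, S i) → N → ℝ)
    (hp : ∀ s i, p s i = q i (s i) + ∑ j ∈ univ.filter (fun j => E i j), Q i j (s i) (s j))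
    (SW : (∀ i, S i) → ℝ) (hSW : ∀ s, SW s = ∑ i, p s i)
    (n k : ℕ) (hn : n = Fintype.card N)
    (s' : ∀ i, S i)
    (K : Finset N) (hKcard : K.card = k)
    -- `K` consists of the `k` players with highest payoff under `s'`:
    (hKtop : ∀ i ∈ K, ∀ j ∉ K, p s' j ≤ p s' i) :
    -- smoothness w.r.t. `s'` of the game where the players of `K` are fixed to `s'`
    (∀ s : ∀ i, S i, (∀ i ∈ K, s i = s' i) →
      (k : ℝ) / n * SW s' ≤ ∑ v, p (Function.update s v (s' v)) v) ∧
    -- hence every Nash equilibrium of the restricted game guarantees `(k/n)·SW(s')`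
    (∀ s : ∀ i, S i, (∀ i ∈ K, s i = s' i) →
      (∀ v ∉ K, ∀ y : S v, p (Function.update s v y) v ≤ p s v) →
      (k : ℝ) / n * SW s' ≤ SW s) := by
  obtain rfl : p = payoff E q Q := funext fun s => funext (hp s)
  obtain rfl : SW = fun s => ∑ i, payoff E q Q s i := funext hSW
  subst hn hKcard
  have smooth : ∀ s : ∀ i, S i, (∀ i ∈ K, s i = s' i) →
      (#K : ℝ) / Fintype.card N * ∑ i, payoff E q Q s' i ≤
        ∑ v, payoff E q Q (update s v (s' v)) v := fun s hs =>
    calc _ ≤ ∑ j ∈ K, payoff E q Q s' j := card_div_card_mul_sum_le_sum_of_forall_le _ K hKtop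
      _ ≤ ∑ v, guaranteedPayoff E q Q K s' v :=
          sum_payoff_le_sum_guaranteedPayoff hE_symm hq hQ_symm K s'
      _ ≤ _ := sum_le_sum fun v _ => guaranteedPayoff_le_payoff_update hE_irrefl hQ_nonneg hs v
  exact ⟨smooth, fun s hs hnash =>
    (smooth s hs).trans (sum_update_le_sum_of_forall_update_le _ hs hnash)⟩

/-- Let `s'` be any joint strategy of a polymatrix coordination game with
individual preferences and `K` the set of the `k` players with highest payoff under `s'`.
Then the game in which the players of `K` are fixed to `s'` is `(k/n, 0)`-smooth w.r.t. `s'`: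
for every profile `s` agreeing with `s'` on `K`, `Σ_v p_v(s'_v, s_{-v}) ≥ (k/n)·SW(s')`.
Consequently every Nash equilibrium `s` of the restricted game satisfies
`SW(s) ≥ (k/n)·SW(s')`. -/
theorem restricted_game_smoothness
    {N : Type*} [Fintype N] [DecidableEq N]
    (S : N → Type*) [∀ i, Fintype (S i)]
    (E : N → N → Prop) [∀ i j, Decidable (E i j)]
    (hE_symm : ∀ i j, E i j ↔ E j i) (hE_irrefl : ∀ i, ¬ E i i)
    (q : ∀ i, S i → ℝ) (hq : ∀ i x, 0 ≤ q i x)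
    (Q : ∀ i j, S i → S j → ℝ)
    (hQ_nonneg : ∀ i j x y, 0 ≤ Q i j x y)
    (hQ_symm : ∀ i j x y, Q i j x y = Q j i y x)
    (p : (∀ i, S i) → N → ℝ)
    (hp : ∀ s i, p s i = q i (s i) + ∑ j ∈ univ.filter (fun j => E i j), Q i j (s i) (s j))
    (SW : (∀ i, S i) → ℝ) (hSW : ∀ s, SW s = ∑ i, p s i)
    (n k : ℕ) (hn : n = Fintype.card N) (hkn : k ≤ n)
    (s' : ∀ i, S i)
    (K : Finset N) (hKcard : K.card = k)
    -- `K` consists of the `k` players with highest payoff under `s'`: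
    (hKtop : ∀ i ∈ K, ∀ j ∉ K, p s' j ≤ p s' i) :
    -- smoothness w.r.t. `s'` of the game where the players of `K` are fixed to `s'`
    (∀ s : ∀ i, S i, (∀ i ∈ K, s i = s' i) →
      (k : ℝ) / n * SW s' ≤ ∑ v, p (Function.update s v (s' v)) v) ∧
    -- hence every Nash equilibrium of the restricted game guarantees `(k/n)·SW(s')`
    (∀ s : ∀ i, S i, (∀ i ∈ K, s i = s' i) →
      (∀ v ∉ K, ∀ y : S v, p (Function.update s v y) v ≤ p s v) →
      (k : ℝ) / n * SW s' ≤ SW s) :=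
  restricted_game_smoothness_general S E hE_symm hE_irrefl q hq Q hQ_nonneg hQ_symm p hp SW hSW n k
    hn s' K hKcard hKtop
end
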